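/- arXiv:1904.07689 — 3 statements merged into one kernel-verified Lean document; each statement's English description precedes it below -/
import Mathlib

section
/- The commutator subgroup of the free group on two generators is not finitely generated. -/
/-!
Map `F₂` onto the wreath product `ℤ ≀ ℤ = (ℤ →₀ ℤ) ⋊ ℤ`, sending the generators to the lamp
`a = δ₀` and the shift `t`. The image of `[F₂, F₂]` lies in the base `ℤ →₀ ℤ`, because `ℤ` is
abelian, and a finitely generated subgroup of the base is supported in a finite set `T`. But the
image contains every `⁅tᵏ, a⁆ = δₖ - δ₀`, whose support `{0, k}` escapes `T` for suitable `k`.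
-/

open SemidirectProduct Finsupp Subgroup
open scoped commutatorElement

namespace Subgroup

variable {G : Type*} [Group G]

theorem FG.map {G' : Type*} [Group G'] {K : Subgroup G} (hK : K.FG) (f : G →* G') :
    (K.map f).FG := by
  classical
  obtain ⟨s, rfl⟩ := hK
  exact ⟨s.image f, by rw [Finset.coe_image, MonoidHom.map_closure]⟩

theorem FG.exists_le_of_le_iSup {ι : Type*} [Nonempty ι] {S : ι → Subgroup G}
    (hS : Directed (· ≤ ·) S) {K : Subgroup G} (hK : K.FG) (hle : K ≤ ⨆ i, S i) :
    ∃ i, K ≤ S i := by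
  classical
  obtain ⟨s, rfl⟩ := hK
  have hmem (x : G) (hx : x ∈ s) : ∃ i, x ∈ S i :=
    (mem_iSup_of_directed hS).1 (hle (subset_closure hx))
  choose! j hj using hmem
  obtain ⟨i, hi⟩ := hS.finset_le (s.image j)
  exact ⟨i, (closure_le _).2 fun x hx ↦ hi _ (Finset.mem_image_of_mem j hx) (hj x hx)⟩

end Subgroup

namespace SemidirectProduct

variable {N G : Type*} [Group N] [Group G] {φ : G →* MulAut N}

theorem commutatorElement_inr_inl (g : G) (n : N) :
    ⁅(inr g : N ⋊[φ] G), (inl n : N ⋊[φ] G)⁆ = inl (φ g n * n⁻¹) := by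
  rw [commutatorElement_def, map_mul, inl_aut, map_inv, map_inv]

end SemidirectProduct

section IntWreath

variable (X Q : Type*) [Group Q] [MulAction Q X]

noncomputable def comapMulAut : Q →* MulAut (Multiplicative (X →₀ ℤ)) :=
  letI := Finsupp.comapDistribMulAction (G := Q) (α := X) (M := ℤ)
  (MulAutMultiplicative (X →₀ ℤ)).symm.toMonoidHom.comp (DistribMulAction.toAddAut Q (X →₀ ℤ))

/-- The restricted permutational wreath product `ℤ ≀_X Q`. -/
abbrev IntWreath := Multiplicative (X →₀ ℤ) ⋊[comapMulAut X Q] Q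

variable {X Q}

theorem comapMulAut_ofAdd_single (q : Q) (x : X) (n : ℤ) :
    comapMulAut X Q q (Multiplicative.ofAdd (single x n)) =
      Multiplicative.ofAdd (single (q • x) n) :=
  mapDomain_single

theorem commutatorElement_inr_inl_single (q : Q) (x : X) :
    ⁅(inr q : IntWreath X Q), (inl (.ofAdd (single x 1)) : IntWreath X Q)⁆ =
      inl (.ofAdd (single (q • x) 1 - single x 1)) := by
  rw [commutatorElement_inr_inl, comapMulAut_ofAdd_single, ofAdd_sub, div_eq_mul_inv]

variable (Q) in
noncomputable def supportedIn (T : Set X) : Subgroup (IntWreath X Q) :=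
  (AddSubgroup.toSubgroup (supported ℤ ℤ T).toAddSubgroup).map inl

theorem support_left_subset_of_mem_supportedIn {T : Set X} {x : IntWreath X Q}
    (hx : x ∈ supportedIn Q T) : ↑x.left.toAdd.support ⊆ T := by
  obtain ⟨n, hn, rfl⟩ := hx
  exact (mem_supported ℤ (M := ℤ) _).1 hn

theorem smul_mem_of_commutatorElement_mem_supportedIn {T : Set X} {q : Q} {x : X}
    (hqx : q • x ≠ x)
    (h : ⁅(inr q : IntWreath X Q), (inl (.ofAdd (single x 1)) : IntWreath X Q)⁆ ∈
      supportedIn Q T) :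
    q • x ∈ T := by
  rw [commutatorElement_inr_inl_single] at h
  refine support_left_subset_of_mem_supportedIn h ?_
  rw [left_inl, toAdd_ofAdd, Finset.mem_coe, mem_support_iff, Finsupp.sub_apply, single_eq_same,
    single_eq_of_ne hqx]
  exact one_ne_zero

theorem ker_rightHom_le_iSup_supportedIn :
    (rightHom : IntWreath X Q →* Q).ker ≤ ⨆ T : Finset X, supportedIn Q T := by
  rw [← range_inl_eq_ker_rightHom]
  rintro _ ⟨n, rfl⟩
  exact mem_iSup_of_mem n.toAdd.support ⟨n, (mem_supported ℤ (M := ℤ) _).2 subset_rfl, rfl⟩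

theorem exists_le_supportedIn_of_fg {K : Subgroup (IntWreath X Q)} (hK : K.FG)
    (hle : K ≤ (rightHom : IntWreath X Q →* Q).ker) : ∃ T : Finset X, K ≤ supportedIn Q T := by
  refine hK.exists_le_of_le_iSup (Monotone.directed_le fun T U hTU ↦ ?_)
    (hle.trans ker_rightHom_le_iSup_supportedIn)
  exact map_mono <| AddSubgroup.toSubgroup.monotone <|
    supported_mono (M := ℤ) (R := ℤ) (Finset.coe_subset.2 hTU)

end IntWreath

/-- The commutator subgroup of the free group on two generators is not
finitely generated. -/
theorem commutator_freeGroup_two_not_fg :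
    ¬ (commutator (FreeGroup (Fin 2))).FG := by
  intro hFG
  let a : IntWreath ℤ (Multiplicative ℤ) := inl (.ofAdd (single 0 1))
  let φ := FreeGroup.lift ![a, inr (.ofAdd 1)]
  have hle : (commutator _).map φ ≤ rightHom.ker :=
    map_le_iff_le_comap.2 (Abelianization.commutator_subset_ker (rightHom.comp φ))
  obtain ⟨T, hT⟩ := exists_le_supportedIn_of_fg (hFG.map φ) hle
  obtain ⟨k, hk⟩ := (insert 0 T).exists_notMem
  have hcomm : ⁅(inr (.ofAdd k) : IntWreath ℤ (Multiplicative ℤ)), a⁆ ∈ (commutator _).map φ := by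
    have : ⁅(inr (.ofAdd k) : IntWreath ℤ (Multiplicative ℤ)), a⁆ =
        φ ⁅(FreeGroup.of 1 : FreeGroup (Fin 2)) ^ k, FreeGroup.of 0⁆ := by
      rw [map_commutatorElement, map_zpow]
      simp [φ, ← map_zpow, ← ofAdd_zsmul]
    rw [this]
    exact mem_map_of_mem _ (commutator_mem_commutator (mem_top _) (mem_top _))
  have hk0 : Multiplicative.ofAdd k • (0 : ℤ) = k := add_zero k
  rw [Finset.mem_insert, not_or, ← hk0] at hk
  exact hk.2 (smul_mem_of_commutatorElement_mem_supportedIn hk.1 (hT hcomm))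
end

section
/- Any entire function φ : ℂ → ℂ with φ(z)³ - 3φ(z) = z³ - 3z for all z ∈ ℂ equals the identity. -/
/-- Any entire function `φ` with `φ(z)³ - 3φ(z) = z³ - 3z` for all `z` is the
identity. -/
theorem entire_deck_transformation_is_id (φ : ℂ → ℂ)
    (hφ : Differentiable ℂ φ)
    (h : ∀ z : ℂ, φ z ^ 3 - 3 * φ z = z ^ 3 - 3 * z) :
    φ = id := by
  by_contra hne
  -- pick z₀ with φ z₀ ≠ z₀
  have : ∃ z₀, φ z₀ ≠ z₀ := by
    by_contra hc
    push_neg at hc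
    exact hne (funext fun z => hc z)
  obtain ⟨z₀, hz₀⟩ := this
  set G : ℂ → ℂ := fun z => φ z ^ 2 + z * φ z + z ^ 2 - 3 with hG
  have hGdiff : Differentiable ℂ G := by
    apply Differentiable.sub
    · exact ((hφ.pow 2).add ((differentiable_id.mul hφ))).add (differentiable_id.pow 2)
    · exact differentiable_const 3
  have hfac : ∀ z, (φ z - z) * G z = 0 := by
    intro z
    have := h z
    simp only [hG]
    ring_nf
    ring_nf at this
    linear_combination this
  -- near z₀, φ z ≠ z, so G = 0 near z₀
  have hcont : ContinuousAt (fun z => φ z - z) z₀ :=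
    (hφ.continuous.sub continuous_id).continuousAt
  have hne0 : ∀ᶠ z in nhds z₀, φ z - z ≠ 0 := by
    have : φ z₀ - z₀ ≠ 0 := sub_ne_zero.mpr hz₀
    exact hcont.eventually_ne this
  have hG0 : ∀ᶠ z in nhds z₀, G z = 0 := by
    filter_upwards [hne0] with z hz
    rcases mul_eq_zero.mp (hfac z) with h1 | h2
    · exact absurd h1 hz
    · exact h2
  -- identity theorem: G ≡ 0
  have hGan : AnalyticOnNhd ℂ G Set.univ :=
    (Complex.analyticOnNhd_univ_iff_differentiable).mpr hGdiff
  have hGzero : Set.EqOn G 0 Set.univ := by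
    apply hGan.eqOn_zero_of_preconnected_of_eventuallyEq_zero
      isPreconnected_univ (Set.mem_univ z₀)
    exact hG0
  have hGall : ∀ z, G z = 0 := fun z => hGzero (Set.mem_univ z)
  -- evaluate at 2 : φ 2 = -1
  have h2 : φ 2 = -1 := by
    have := hGall 2
    simp only [hG] at this
    have : (φ 2 + 1) ^ 2 = 0 := by ring_nf; ring_nf at this; linear_combination this
    have := pow_eq_zero_iff (n := 2) (by norm_num) |>.mp this
    linear_combination this
  -- derivative of G at 2
  set d := deriv φ 2 with hd
  have hφ2 : HasDerivAt φ d 2 := (hφ 2).hasDerivAt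
  have hDG := (((hφ2.pow 2).add ((hasDerivAt_id (2:ℂ)).mul hφ2)).add
      ((hasDerivAt_id (2:ℂ)).pow 2)).sub (hasDerivAt_const (2:ℂ) (3:ℂ))
  have hGfun : G = fun _ => (0 : ℂ) := funext hGall
  have hDG0 : HasDerivAt G 0 2 := by rw [hGfun]; exact hasDerivAt_const 2 0
  have key := hDG.unique hDG0
  simp [h2] at key
  have : (3 : ℂ) = 0 := by linear_combination key
  norm_num at this
end

section
/- If φ is an entire function satisfying φ(z)³ - 3φ(z) = z³ - 3z for all z ∈ ℂ, then φ(z) = O(|z|) as |z| → ∞, and hence φ is a polynomial of degree at most 1. -/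
/-!
If `‖w‖ > 2‖z‖ ≥ 4` then `‖w‖³ - 3‖w‖` exceeds `‖z‖³ + 3‖z‖`, so the cubic equation forces
`‖φ z‖ ≤ 2‖z‖` for large `z`. For an entire `f` of linear growth, the difference quotient
`dslope f 0` is entire (removable singularity) and bounded, hence constant by Liouville.
-/

open Asymptotics Bornology Filter Set

theorem norm_le_two_mul_norm_of_cubic_eq {𝕜 : Type*} [NormedField 𝕜] {w z : 𝕜}
    (h : w ^ 3 - 3 * w = z ^ 3 - 3 * z) (hz : 2 ≤ ‖z‖) : ‖w‖ ≤ 2 * ‖z‖ := by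
  have hcube : ‖w‖ ^ 3 ≤ ‖z‖ ^ 3 + 3 * ‖z‖ + 3 * ‖w‖ := by
    have hw : w ^ 3 = z ^ 3 - 3 * z + 3 * w := by linear_combination h
    have h3 (x : 𝕜) : ‖3 * x‖ ≤ 3 * ‖x‖ := by
      simpa [nsmul_eq_mul] using (norm_nsmul_le (n := 3) (a := x))
    calc ‖w‖ ^ 3 = ‖z ^ 3 - 3 * z + 3 * w‖ := by rw [← hw, norm_pow]
      _ ≤ ‖z ^ 3‖ + ‖3 * z‖ + ‖3 * w‖ := (norm_add_le _ _).trans (by gcongr; exact norm_sub_le _ _)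
      _ ≤ ‖z‖ ^ 3 + 3 * ‖z‖ + 3 * ‖w‖ := by rw [norm_pow]; gcongr <;> exact h3 _
  by_contra! hlt
  nlinarith [sq_nonneg ‖w‖, sq_nonneg ‖z‖, sq_nonneg (‖w‖ - ‖z‖)]

theorem Differentiable.exists_eq_add_smul_of_isBigO_id {F : Type*} [NormedAddCommGroup F]
    [NormedSpace ℂ F] [CompleteSpace F] {f : ℂ → F} (hf : Differentiable ℂ f)
    (hO : f =O[cobounded ℂ] id) : ∃ a b : F, ∀ z, f z = a + z • b := by
  have hg : Differentiable ℂ (dslope f 0) :=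
    differentiableOn_univ.mp ((Complex.differentiableOn_dslope univ_mem).mpr hf.differentiableOn)
  have hgO : dslope f 0 =O[cobounded ℂ] (1 : ℂ → ℝ) := by
    have hsub : (fun z => f z - f 0) =O[cobounded ℂ] id :=
      hO.sub (isLittleO_const_id_cobounded (f 0)).isBigO
    have hquot := (isBigO_norm_right.mpr (isBigO_refl (fun z : ℂ => z⁻¹) _)).smul hsub.norm_right
    refine hquot.congr' ?_ ?_ <;> filter_upwards [eventually_ne_cobounded 0] with z hz
    · rw [dslope_of_ne _ hz, slope_def_module, sub_zero]
    · simp [hz]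
  rw [Metric.cobounded_eq_cocompact, ← hg.continuous.isBounded_range_iff_isBigO] at hgO
  have hconst (z : ℂ) : dslope f 0 z = dslope f 0 0 := hg.apply_eq_apply_of_bounded hgO z 0
  refine ⟨f 0, dslope f 0 0, fun z => ?_⟩
  have hslope := sub_smul_dslope f 0 z
  rw [sub_zero, hconst z] at hslope
  rw [hslope, add_sub_cancel]

/-- An entire `φ` with `φ(z)³ - 3φ(z) = z³ - 3z` satisfies `φ(z) = O(|z|)` as
`|z| → ∞`, and hence is a polynomial of degree at most one: `φ(z) = a + bz`. -/
theorem entire_solution_is_affine (φ : ℂ → ℂ)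
    (hφ : Differentiable ℂ φ)
    (h : ∀ z : ℂ, φ z ^ 3 - 3 * φ z = z ^ 3 - 3 * z) :
    (∃ C R : ℝ, ∀ z : ℂ, R ≤ ‖z‖ →
      ‖φ z‖ ≤ C * ‖z‖) ∧
    (∃ a b : ℂ, ∀ z : ℂ, φ z = a + b * z) := by
  have growth (z : ℂ) (hz : 2 ≤ ‖z‖) : ‖φ z‖ ≤ 2 * ‖z‖ :=
    norm_le_two_mul_norm_of_cubic_eq (h z) hz
  have hO : φ =O[cobounded ℂ] id := isBigO_iff.mpr
    ⟨2, (tendsto_norm_cobounded_atTop.eventually_ge_atTop 2).mono growth⟩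
  obtain ⟨a, b, hab⟩ := hφ.exists_eq_add_smul_of_isBigO_id hO
  exact ⟨⟨2, 2, growth⟩, a, b, fun z => by rw [hab, smul_eq_mul, mul_comm]⟩
end
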